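/- If x* is a local minimum of (SPO), i.e. x* ∈ X and there is ε > 0 such that f(x*) + ρ‖x*‖₀ ≤ f(x) + ρ‖x‖₀ for all x ∈ X with ‖x − x*‖ < ε, then x* is an AS-stationary point of (SPO). -/

import Mathlib

/-!
Quadratic penalty method. Near `x*`, every vector supported in `supp x*` has exactly the support
of `x*`, so the `ℓ₀` term is constant there and `x*` locally minimizes `f` alone over the feasible
such vectors. Let `x_k` minimize `f + k P + ‖x - x*‖²`, with `P = ∑ max(gᵢ, 0)² + ∑ hⱼ²`, over a
small closed ball of that subspace; then `x_k → x*`. For `i ∈ supp x*` the points `x_k` eventually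
lie in the open ball, where the `i`-th partial derivative of the penalized objective vanishes:
`∂L/∂xᵢ(x_k, λ_k, μ_k) = -2 (x_k,i - x*_i) → 0` for `λ_k = 2k max(g(x_k), 0)`, `μ_k = 2k h(x_k)`,
and `min(-gᵢ(x_k), λ_k,i) = -max(gᵢ(x_k), 0) → 0`.
-/

open Filter Topology

noncomputable section

/-- Euclidean n-space. -/
abbrev E (n : ℕ) : Type := EuclideanSpace ℝ (Fin n)

/-- The "ℓ₀-norm": number of nonzero components. -/
def norm0 {n : ℕ} (x : E n) : ℕ := Set.ncard {i | x i ≠ 0}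

/-- The SP-Lagrangian L(x, λ, μ) = f(x) + λᵀg(x) + μᵀh(x). -/
def LSP {n m q : ℕ} (f : E n → ℝ) (g : Fin m → E n → ℝ) (h : Fin q → E n → ℝ)
    (lam : Fin m → ℝ) (mu : Fin q → ℝ) (x : E n) : ℝ :=
  f x + (∑ i, lam i * g i x) + (∑ j, mu j * h j x)

/-- AS-stationarity (approximate S-stationarity) of x* for (SPO). -/
def ASStat {n m q : ℕ} (f : E n → ℝ) (g : Fin m → E n → ℝ) (h : Fin q → E n → ℝ)
    (xstar : E n) : Prop :=
  ∃ (xk : ℕ → E n) (lamk : ℕ → Fin m → ℝ) (muk : ℕ → Fin q → ℝ),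
    Tendsto xk atTop (𝓝 xstar) ∧
    (∀ k i, 0 ≤ lamk k i) ∧
    (∀ i, xstar i ≠ 0 →
      Tendsto (fun k => gradient (LSP f g h (lamk k) (muk k)) (xk k) i) atTop (𝓝 0)) ∧
    (∀ i, Tendsto (fun k => min (-(g i (xk k))) (lamk k i)) atTop (𝓝 0))

def penalized {α : Type*} [PseudoMetricSpace α] (f P : α → ℝ) (x₀ : α) (k : ℕ) (x : α) : ℝ :=
  f x + k * P x + dist x x₀ ^ 2

theorem tendsto_of_isMinOn_penalized {α : Type*} [MetricSpace α] {C : Set α}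
    (hC : IsCompact C) {f P : α → ℝ} (hf : ContinuousOn f C) (hP : ContinuousOn P C)
    (hP_nonneg : ∀ x ∈ C, 0 ≤ P x) {x₀ : α} (hx₀ : x₀ ∈ C) (hPx₀ : P x₀ = 0)
    (hfeas : ∀ x ∈ C, P x = 0 → f x₀ ≤ f x) {xk : ℕ → α} (hxk : ∀ k, xk k ∈ C)
    (hmin : ∀ k, IsMinOn (penalized f P x₀ k) C (xk k)) :
    Tendsto xk atTop (𝓝 x₀) := by
  obtain ⟨m, hm⟩ := hC.bddBelow_image hf
  have hle : ∀ k, f (xk k) + k * P (xk k) + dist (xk k) x₀ ^ 2 ≤ f x₀ := fun k => by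
    simpa [penalized, hPx₀] using hmin k hx₀
  rw [Metric.tendsto_atTop]
  intro δ hδ
  set S := C ∩ (fun x => f x + dist x x₀ ^ 2) ⁻¹' Set.Iic (f x₀) ∩ {x | δ ≤ dist x x₀}
  have hS : IsCompact S := by
    refine (hC.of_isClosed_subset ?_ Set.inter_subset_left).inter_right
      (isClosed_le continuous_const (continuous_id.dist continuous_const))
    exact (hf.add ((continuous_id.dist continuous_const).pow 2).continuousOn)
      |>.preimage_isClosed_of_isClosed hC.isClosed isClosed_Iic
  -- A far point doing as well as `x₀` for `f + dist²` cannot be feasible.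
  have hPpos : ∀ x ∈ S, 0 < P x := by
    rintro x ⟨⟨hxC, hfx⟩, hδx⟩
    refine (hP_nonneg x hxC).lt_of_ne' fun hPx => ?_
    have := hfeas x hxC hPx
    simp only [Set.mem_preimage, Set.mem_Iic] at hfx
    nlinarith [show δ ≤ dist x x₀ from hδx]
  obtain ⟨p, hp, hpS⟩ := hS.exists_forall_le' (hP.mono fun x hx => hx.1.1) hPpos
  obtain ⟨N, hN⟩ := exists_nat_gt ((f x₀ - m) / p)
  refine ⟨N, fun k hk => by_contra fun hfar => ?_⟩
  have hkP : 0 ≤ (k : ℝ) * P (xk k) := mul_nonneg k.cast_nonneg (hP_nonneg _ (hxk k))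
  have hxkS : xk k ∈ S := by
    refine ⟨⟨hxk k, ?_⟩, not_lt.mp hfar⟩
    simp only [Set.mem_preimage, Set.mem_Iic]
    linarith [hle k]
  have hNk : (N : ℝ) * p ≤ k * P (xk k) :=
    mul_le_mul (Nat.cast_le.mpr hk) (hpS _ hxkS) hp.le k.cast_nonneg
  rw [div_lt_iff₀ hp] at hN
  nlinarith [hle k, hm ⟨xk k, hxk k, rfl⟩, sq_nonneg (dist (xk k) x₀)]

theorem hasDerivAt_max_zero_sq (t : ℝ) :
    HasDerivAt (fun s : ℝ => max s 0 ^ 2) (2 * max t 0) t := by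
  refine hasDerivAt_of_hasDerivAt_of_ne' (f := fun s : ℝ => max s 0 ^ 2)
    (g := fun s => 2 * max s 0) (x := 0) (fun y hy => ?_) (by fun_prop) (by fun_prop) t
  rcases hy.lt_or_gt with hy | hy
  · have : (fun s : ℝ => max s 0 ^ 2) =ᶠ[𝓝 y] fun _ => 0 := by
      filter_upwards [Iio_mem_nhds hy] with s hs
      simp [max_eq_right (Set.mem_Iio.mp hs).le]
    simpa [max_eq_right hy.le] using (hasDerivAt_const y (0 : ℝ)).congr_of_eventuallyEq this
  · have : (fun s : ℝ => max s 0 ^ 2) =ᶠ[𝓝 y] fun s => s ^ 2 := by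
      filter_upwards [Ioi_mem_nhds hy] with s hs
      simp [max_eq_left (Set.mem_Ioi.mp hs).le]
    simpa [max_eq_left hy.le] using (hasDerivAt_pow 2 y).congr_of_eventuallyEq this

theorem min_neg_mul_max_zero {a c : ℝ} (hc : 0 ≤ c) : min (-a) (c * max a 0) = -max a 0 := by
  rcases le_total a 0 with ha | ha
  · simp [ha]
  · rw [max_eq_left ha, min_eq_left (by nlinarith)]

theorem HasFDerivAt.apply_eq_zero_of_isLocalMin_line {V : Type*} [NormedAddCommGroup V]
    [NormedSpace ℝ V] {F : V → ℝ} {F' : V →L[ℝ] ℝ} {x v : V} (hF : HasFDerivAt F F' x)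
    (hmin : IsLocalMin (fun t : ℝ => F (x + t • v)) 0) : F' v = 0 := by
  have hline : HasDerivAt (fun t : ℝ => x + t • v) v 0 := by
    simpa using ((hasDerivAt_id (0 : ℝ)).smul_const v).const_add x
  have hF0 : HasFDerivAt F F' (x + (0 : ℝ) • v) := by simpa using hF
  simpa using hmin.hasDerivAt_eq_zero (hF0.comp_hasDerivAt (0 : ℝ) hline)

theorem IsMinOn.isLocalMin_line {V : Type*} [NormedAddCommGroup V] [NormedSpace ℝ V]
    {F : V → ℝ} {K : Submodule ℝ V} {x₀ x v : V} {r : ℝ}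
    (hmin : IsMinOn F (K ∩ Metric.closedBall x₀ r) x) (hxK : x ∈ K) (hxr : dist x x₀ < r)
    (hvK : v ∈ K) : IsLocalMin (fun t : ℝ => F (x + t • v)) 0 := by
  have hline : Tendsto (fun t : ℝ => x + t • v) (𝓝 0) (𝓝 x) := by
    have hcont : Continuous fun t : ℝ => x + t • v := by fun_prop
    simpa using hcont.tendsto 0
  filter_upwards [hline.eventually (Metric.isOpen_ball.mem_nhds hxr)] with t ht
  simpa using hmin ⟨K.add_mem hxK (K.smul_mem t hvK), Metric.ball_subset_closedBall ht⟩

theorem HasFDerivAt.gradient_apply {ι : Type*} [Fintype ι] [DecidableEq ι]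
    {F : EuclideanSpace ℝ ι → ℝ} {F' : EuclideanSpace ℝ ι →L[ℝ] ℝ} {x : EuclideanSpace ℝ ι}
    (hF : HasFDerivAt F F' x) (i : ι) : gradient F x i = F' (EuclideanSpace.single i 1) := by
  have := InnerProductSpace.toDual_symm_apply (𝕜 := ℝ) (x := EuclideanSpace.single i 1) (y := F')
  rw [EuclideanSpace.inner_single_right] at this
  simpa [gradient, hF.fderiv] using this

section Penalty

variable {α ι κ : Type*} [Fintype ι] [Fintype κ] (g : ι → α → ℝ) (h : κ → α → ℝ)

def penalty (x : α) : ℝ := ∑ i, max (g i x) 0 ^ 2 + ∑ j, h j x ^ 2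

theorem penalty_nonneg (x : α) : 0 ≤ penalty g h x := by unfold penalty; positivity

theorem penalty_eq_zero_iff {x : α} :
    penalty g h x = 0 ↔ (∀ i, g i x ≤ 0) ∧ ∀ j, h j x = 0 := by
  simp [penalty, add_eq_zero_iff_of_nonneg, Finset.sum_nonneg, sq_nonneg,
    Finset.sum_eq_zero_iff_of_nonneg]

variable {g h}

theorem continuous_penalty [TopologicalSpace α] (hg : ∀ i, Continuous (g i))
    (hh : ∀ j, Continuous (h j)) : Continuous (penalty g h) := by
  unfold penalty; fun_prop

theorem hasFDerivAt_penalty [NormedAddCommGroup α] [NormedSpace ℝ α]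
    {g' : ι → α →L[ℝ] ℝ} {h' : κ → α →L[ℝ] ℝ} {x : α}
    (hg : ∀ i, HasFDerivAt (g i) (g' i) x) (hh : ∀ j, HasFDerivAt (h j) (h' j) x) :
    HasFDerivAt (penalty g h)
      (∑ i, (2 * max (g i x) 0) • g' i + ∑ j, (2 * h j x) • h' j) x := by
  refine (HasFDerivAt.fun_sum fun i _ => ?_).add (HasFDerivAt.fun_sum fun j _ => ?_)
  · exact (hasDerivAt_max_zero_sq (g i x)).comp_hasFDerivAt x (hg i)
  · simpa using (hh j).pow 2

end Penalty

section SPO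

variable {n m q : ℕ} {f : E n → ℝ} {g : Fin m → E n → ℝ} {h : Fin q → E n → ℝ}

theorem hasFDerivAt_LSP {f' : E n →L[ℝ] ℝ} {g' : Fin m → E n →L[ℝ] ℝ}
    {h' : Fin q → E n →L[ℝ] ℝ} {x : E n} (hf : HasFDerivAt f f' x)
    (hg : ∀ i, HasFDerivAt (g i) (g' i) x) (hh : ∀ j, HasFDerivAt (h j) (h' j) x)
    (lam : Fin m → ℝ) (mu : Fin q → ℝ) :
    HasFDerivAt (LSP f g h lam mu) (f' + ∑ i, lam i • g' i + ∑ j, mu j • h' j) x :=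
  (hf.add (HasFDerivAt.fun_sum fun i _ => (hg i).const_mul (lam i))).add
    (HasFDerivAt.fun_sum fun j _ => (hh j).const_mul (mu j))

def supportSubmodule (x₀ : E n) : Submodule ℝ (E n) where
  carrier := {x | ∀ i, x₀ i = 0 → x i = 0}
  add_mem' hx hy i hi := by simp [hx i hi, hy i hi]
  zero_mem' _ _ := rfl
  smul_mem' c x hx i hi := by simp [hx i hi]

theorem single_mem_supportSubmodule {x₀ : E n} {i : Fin n} (hi : x₀ i ≠ 0) :
    EuclideanSpace.single i 1 ∈ supportSubmodule x₀ := fun j hj => by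
  simp [show j ≠ i by rintro rfl; exact hi hj]

theorem exists_pos_forall_feasible_le {ρ : ℝ} {xstar : E n} (hxnn : ∀ i, 0 ≤ xstar i)
    (hlocmin : ∃ ε > (0 : ℝ), ∀ x : E n,
      (∀ i, g i x ≤ 0) → (∀ j, h j x = 0) → (∀ i, 0 ≤ x i) →
      ‖x - xstar‖ < ε →
      f xstar + ρ * (norm0 xstar : ℝ) ≤ f x + ρ * (norm0 x : ℝ)) :
    ∃ r > 0, ∀ x ∈ supportSubmodule xstar, dist x xstar ≤ r →
      ((∀ i, g i x ≤ 0) ∧ ∀ j, h j x = 0) → f xstar ≤ f x := by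
  obtain ⟨ε, hε, hmin⟩ := hlocmin
  have hnear : ∀ᶠ x in 𝓝 xstar, dist x xstar < ε ∧ ∀ i, xstar i ≠ 0 → 0 < x i := by
    refine Filter.Eventually.and (Metric.ball_mem_nhds xstar hε) (eventually_all.mpr fun i => ?_)
    by_cases hi : xstar i = 0
    · simp [hi]
    · simpa [hi] using (EuclideanSpace.proj i).continuous.continuousAt.eventually
        (eventually_gt_nhds ((hxnn i).lt_of_ne' hi))
  obtain ⟨r, hr, hball⟩ := Metric.eventually_nhds_iff.mp hnear
  refine ⟨r / 2, half_pos hr, fun x hxV hxr ⟨hgx, hhx⟩ => ?_⟩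
  obtain ⟨hxε, hpos⟩ := hball (hxr.trans_lt (half_lt_self hr))
  have hnn : ∀ i, 0 ≤ x i := fun i => by
    by_cases hi : xstar i = 0
    · exact (hxV i hi).ge
    · exact (hpos i hi).le
  have hnorm0 : norm0 x = norm0 xstar := by
    unfold norm0
    congr 1
    ext i
    exact ⟨fun hx hs => hx (hxV i hs), fun hs => (hpos i hs).ne'⟩
  have := hmin x hgx hhx hnn (by rwa [← dist_eq_norm])
  rw [hnorm0] at this
  linarith

theorem gradient_LSP_apply_of_isLocalMin_penalized (hf : Differentiable ℝ f)
    (hg : ∀ i, Differentiable ℝ (g i)) (hh : ∀ j, Differentiable ℝ (h j)) {xstar x : E n} {k : ℕ}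
    {i : Fin n} (hmin : IsLocalMin (fun t : ℝ =>
      penalized f (penalty g h) xstar k (x + t • EuclideanSpace.single i 1)) 0) :
    gradient (LSP f g h (fun j => 2 * k * max (g j x) 0) (fun j => 2 * k * h j x)) x i =
      -(2 * (x i - xstar i)) := by
  have hg' := fun j => (hg j x).hasFDerivAt
  have hh' := fun j => (hh j x).hasFDerivAt
  have hdist : HasFDerivAt (fun y => dist y xstar ^ 2) (2 • innerSL ℝ (x - xstar)) x := by
    simpa [dist_eq_norm] using ((hasFDerivAt_id x).sub_const xstar).norm_sq
  have hcrit := (((hf x).hasFDerivAt.add ((hasFDerivAt_penalty hg' hh').const_mul (k : ℝ))).add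
    hdist).apply_eq_zero_of_isLocalMin_line hmin
  rw [((hasFDerivAt_LSP (hf x).hasFDerivAt hg' hh') _ _).gradient_apply]
  simp only [add_apply, smul_apply, sum_apply, innerSL_apply_apply,
    EuclideanSpace.inner_single_right, smul_eq_mul] at hcrit ⊢
  simp only [PiLp.sub_apply, conj_trivial, one_mul, nsmul_eq_mul, Nat.cast_ofNat, mul_add,
    Finset.mul_sum, ← mul_assoc, mul_comm (k : ℝ) 2] at hcrit
  linarith

end SPO

theorem stmt_9_general {n m q : ℕ} {ρ : ℝ}
    (f : E n → ℝ) (g : Fin m → E n → ℝ) (h : Fin q → E n → ℝ)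
    (hf : ContDiff ℝ 1 f) (hg : ∀ i, ContDiff ℝ 1 (g i)) (hh : ∀ j, ContDiff ℝ 1 (h j))
    (xstar : E n)
    -- x* ∈ X :
    (hgx : ∀ i, g i xstar ≤ 0) (hhx : ∀ j, h j xstar = 0) (hxnn : ∀ i, 0 ≤ xstar i)
    -- x* is a local minimum of (SPO):
    (hlocmin : ∃ ε > (0 : ℝ), ∀ x : E n,
      (∀ i, g i x ≤ 0) → (∀ j, h j x = 0) → (∀ i, 0 ≤ x i) →
      ‖x - xstar‖ < ε →
      f xstar + ρ * (norm0 xstar : ℝ) ≤ f x + ρ * (norm0 x : ℝ)) :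
    ASStat f g h xstar := by
  obtain ⟨r, hr, hfeas⟩ := exists_pos_forall_feasible_le hxnn hlocmin
  set C := (supportSubmodule xstar : Set (E n)) ∩ Metric.closedBall xstar r
  have hC : IsCompact C :=
    (isCompact_closedBall xstar r).inter_left (Submodule.closed_of_finiteDimensional _)
  have hxC : xstar ∈ C := ⟨fun _ => id, Metric.mem_closedBall_self hr.le⟩
  have hP : Continuous (penalty g h) :=
    continuous_penalty (fun i => (hg i).continuous) fun j => (hh j).continuous
  choose xk hxkC hxkmin using fun k : ℕ => hC.exists_isMinOn ⟨xstar, hxC⟩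
    (by unfold penalized; fun_prop : Continuous (penalized f (penalty g h) xstar k)).continuousOn
  have hconv : Tendsto xk atTop (𝓝 xstar) :=
    tendsto_of_isMinOn_penalized hC hf.continuous.continuousOn hP.continuousOn
      (fun x _ => penalty_nonneg g h x) hxC ((penalty_eq_zero_iff g h).mpr ⟨hgx, hhx⟩)
      (fun x hx hPx => hfeas x hx.1 hx.2 ((penalty_eq_zero_iff g h).mp hPx)) hxkC hxkmin
  refine ⟨xk, fun k j => 2 * k * max (g j (xk k)) 0, fun k j => 2 * k * h j (xk k), hconv,
    fun k j => by positivity, fun i hi => ?_, fun i => ?_⟩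
  · have hlim : Tendsto (fun k => -(2 * (xk k i - xstar i))) atTop (𝓝 0) := by
      simpa using ((((EuclideanSpace.proj i).continuous.tendsto xstar).comp hconv).sub_const
        (xstar i)).const_mul 2 |>.neg
    refine hlim.congr' ?_
    filter_upwards [hconv.eventually (Metric.ball_mem_nhds xstar hr)] with k hk
    exact (gradient_LSP_apply_of_isLocalMin_penalized (hf.differentiable one_ne_zero)
      (fun j => (hg j).differentiable one_ne_zero) (fun j => (hh j).differentiable one_ne_zero)
      ((hxkmin k).isLocalMin_line (hxkC k).1 hk (single_mem_supportSubmodule hi))).symm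
  · simp_rw [fun k : ℕ => min_neg_mul_max_zero (a := g i (xk k)) (by positivity : (0 : ℝ) ≤ 2 * k)]
    simpa [max_eq_right (hgx i)] using
      ((((hg i).continuous.tendsto xstar).comp hconv).max (tendsto_const_nhds (x := (0 : ℝ)))).neg

/-- every local minimum of (SPO) is an AS-stationary point. -/
theorem stmt_9 {n m q : ℕ} (hn : 1 ≤ n) {ρ : ℝ} (hρ : 0 < ρ)
    (f : E n → ℝ) (g : Fin m → E n → ℝ) (h : Fin q → E n → ℝ)
    (hf : ContDiff ℝ 1 f) (hg : ∀ i, ContDiff ℝ 1 (g i)) (hh : ∀ j, ContDiff ℝ 1 (h j))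
    (xstar : E n)
    -- x* ∈ X :
    (hgx : ∀ i, g i xstar ≤ 0) (hhx : ∀ j, h j xstar = 0) (hxnn : ∀ i, 0 ≤ xstar i)
    -- x* is a local minimum of (SPO):
    (hlocmin : ∃ ε > (0 : ℝ), ∀ x : E n,
      (∀ i, g i x ≤ 0) → (∀ j, h j x = 0) → (∀ i, 0 ≤ x i) →
      ‖x - xstar‖ < ε →
      f xstar + ρ * (norm0 xstar : ℝ) ≤ f x + ρ * (norm0 x : ℝ)) :
    ASStat f g h xstar :=
  stmt_9_general f g h hf hg hh xstar hgx hhx hxnn hlocmin
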